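/- Let α ≥ 2 be an integer, let p, q be distributions on A = {1,…,k} with q_i > 0 for every i, let n ≥ 1 be an integer, and let N_1,…,N_k be independent Poisson random variables with N_i having mean n·p_i. Then the estimator X = n^{−α}·Σ_{i=1}^k q_i^{1−α}·N_i^{α̲} is unbiased for the divergence power sum: E[X] = M_α(p,q) = Σ_{i=1}^k p_i^α q_i^{1−α}. -/

import Mathlib

/-!
For `N ~ Poisson(λ)` one has `P(N = m + α) · (m + α)^{α̲} = λ^α · P(N = m)`, and the falling
power vanishes below `α`, so `E[N^{α̲}] = λ^α`. For independent coordinates the series of a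
product of nonnegative one-coordinate functions factors, so the same holds for each coordinate
of the Poisson vector, and linearity gives `E[X] = n^{-α} ∑ᵢ qᵢ^{1-α} (n pᵢ)^α = M_α(p, q)`.
-/

open Finset Real

/-- `p` is a probability distribution on `Fin k`. -/
def IsDist {k : ℕ} (p : Fin k → ℝ) : Prop := (∀ i, 0 ≤ p i) ∧ ∑ i, p i = 1

/-- Probability mass function of a Poisson random variable with mean `l`. -/
noncomputable def poissonPMF (l : ℝ) (j : ℕ) : ℝ :=
  Real.exp (-l) * l ^ j / (Nat.factorial j)

/-- Expectation of `g` under `k` independent Poisson random variables with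
means `lam i`. -/
noncomputable def poissonE {k : ℕ} (lam : Fin k → ℝ) (g : (Fin k → ℕ) → ℝ) : ℝ :=
  ∑' ν : Fin k → ℕ, (∏ i, poissonPMF (lam i) (ν i)) * g ν

open scoped Nat

theorem hasSum_fin_pi_prod_of_nonneg {β : Type*} {k : ℕ} {f : Fin k → β → ℝ}
    {s : Fin k → ℝ} (hf0 : ∀ i, 0 ≤ f i) (hf : ∀ i, HasSum (f i) (s i)) :
    HasSum (fun ν : Fin k → β => ∏ i, f i (ν i)) (∏ i, s i) := by
  induction k with
  | zero => simp
  | succ k ih =>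
    set tail : (Fin k → β) → ℝ := fun ν => ∏ i : Fin k, f i.succ (ν i)
    have htail : HasSum tail (∏ i : Fin k, s i.succ) :=
      ih (fun i => hf0 i.succ) (fun i => hf i.succ)
    have htail0 : 0 ≤ tail := fun ν => prod_nonneg fun (i : Fin k) _ => hf0 i.succ (ν i)
    have hcons : (fun ν => ∏ i, f i (ν i)) ∘ Fin.consEquiv (fun _ => β) =
        fun x => f 0 x.1 * tail x.2 := by
      ext ⟨b, ν⟩
      simp [tail, Fin.prod_univ_succ]
    rw [← (Fin.consEquiv fun _ => β).hasSum_iff, hcons, Fin.prod_univ_succ]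
    exact (hf 0).mul htail ((hf 0).summable.mul_of_nonneg htail.summable (hf0 0) htail0)

lemma poissonPMF_nonneg {l : ℝ} (hl : 0 ≤ l) (j : ℕ) : 0 ≤ poissonPMF l j := by
  unfold poissonPMF
  positivity

lemma poissonPMF_add_mul_descFactorial (l : ℝ) (m α : ℕ) :
    poissonPMF l (m + α) * (m + α).descFactorial α = l ^ α * (exp (-l) * l ^ m / m !) := by
  have hfac := Nat.factorial_mul_descFactorial (Nat.le_add_left α m)
  rw [Nat.add_sub_cancel] at hfac
  have hm : (m ! : ℝ) ≠ 0 := by positivity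
  rw [poissonPMF, ← hfac, Nat.cast_mul, pow_add]
  field_simp

theorem hasSum_poissonPMF_mul_descFactorial (l : ℝ) (α : ℕ) :
    HasSum (fun j => poissonPMF l j * j.descFactorial α) (l ^ α) := by
  rw [← hasSum_nat_add_iff' α, sum_eq_zero fun j hj => by
    simp [Nat.descFactorial_eq_zero_iff_lt.mpr (mem_range.mp hj)], sub_zero]
  simp only [poissonPMF_add_mul_descFactorial]
  simpa [mul_div_assoc, ← exp_eq_exp_ℝ, ← exp_add] using
    ((NormedSpace.expSeries_div_hasSum_exp l).mul_left (exp (-l))).mul_left (l ^ α)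

theorem hasSum_prod_poissonPMF_mul_prod_descFactorial {k : ℕ} {lam : Fin k → ℝ}
    (hlam : ∀ i, 0 ≤ lam i) (e : Fin k → ℕ) :
    HasSum (fun ν : Fin k → ℕ =>
        (∏ i, poissonPMF (lam i) (ν i)) * ∏ i, ((ν i).descFactorial (e i) : ℝ))
      (∏ i, lam i ^ e i) := by
  simp_rw [← prod_mul_distrib]
  refine hasSum_fin_pi_prod_of_nonneg
    (f := fun i m => poissonPMF (lam i) m * m.descFactorial (e i))
    (fun i m => ?_) fun i => hasSum_poissonPMF_mul_descFactorial (lam i) (e i)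
  exact mul_nonneg (poissonPMF_nonneg (hlam i) m) (Nat.cast_nonneg _)

theorem hasSum_prod_poissonPMF_mul_descFactorial {k : ℕ} {lam : Fin k → ℝ}
    (hlam : ∀ i, 0 ≤ lam i) (i : Fin k) (α : ℕ) :
    HasSum (fun ν : Fin k → ℕ => (∏ j, poissonPMF (lam j) (ν j)) * (ν i).descFactorial α)
      (lam i ^ α) := by
  have hdesc (ν : Fin k → ℕ) :
      ∏ j, ((ν j).descFactorial (Pi.single (M := fun _ => ℕ) i α j) : ℝ) =
        (ν i).descFactorial α := by
    rw [Fintype.prod_eq_single i fun j hj => by simp [hj]]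
    simp
  have hpow : ∏ j, lam j ^ Pi.single (M := fun _ => ℕ) i α j = lam i ^ α := by
    rw [Fintype.prod_eq_single i fun j hj => by simp [hj]]
    simp
  simpa only [hdesc, hpow] using
    hasSum_prod_poissonPMF_mul_prod_descFactorial hlam (Pi.single i α)

theorem poissonized_estimator_unbiased_general (α : ℕ) (k : ℕ)
    (p q : Fin k → ℝ) (hp : IsDist p)
    (n : ℕ) (hn : 1 ≤ n) :
    poissonE (fun i => (n : ℝ) * p i)
        (fun ν => (n : ℝ) ^ (-(α : ℝ)) *
          ∑ i, q i ^ (1 - (α : ℝ)) * ((ν i).descFactorial α : ℝ))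
      = ∑ i, p i ^ (α : ℝ) * q i ^ (1 - (α : ℝ)) := by
  have hlam : ∀ i, 0 ≤ (n : ℝ) * p i := fun i => mul_nonneg n.cast_nonneg (hp.1 i)
  have hn0 : (0 : ℝ) < n := by exact_mod_cast hn
  have hscale : (n : ℝ) ^ (-(α : ℝ)) * (n : ℝ) ^ α = 1 := by
    rw [rpow_neg hn0.le, rpow_natCast, inv_mul_cancel₀ (pow_pos hn0 α).ne']
  have hmoments := (hasSum_sum (s := univ) fun i _ =>
    (hasSum_prod_poissonPMF_mul_descFactorial hlam i α).mul_left (q i ^ (1 - (α : ℝ)))).mul_left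
      ((n : ℝ) ^ (-(α : ℝ)))
  unfold poissonE
  convert hmoments.tsum_eq using 1
  · congr 1
    ext ν
    simp only [mul_sum]
    exact sum_congr rfl fun i _ => by ring
  · simp only [mul_sum, rpow_natCast]
    exact sum_congr rfl fun i _ => by
      linear_combination (p i ^ α * q i ^ (1 - (α : ℝ))) * hscale.symm

/-- the bias-corrected power sum estimator is unbiased under
Poisson sampling. -/
theorem poissonized_estimator_unbiased (α : ℕ) (hα : 2 ≤ α) (k : ℕ)
    (p q : Fin k → ℝ) (hp : IsDist p) (hq : IsDist q) (hqpos : ∀ i, 0 < q i)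
    (n : ℕ) (hn : 1 ≤ n) :
    poissonE (fun i => (n : ℝ) * p i)
        (fun ν => (n : ℝ) ^ (-(α : ℝ)) *
          ∑ i, q i ^ (1 - (α : ℝ)) * ((ν i).descFactorial α : ℝ))
      = ∑ i, p i ^ (α : ℝ) * q i ^ (1 - (α : ℝ)) :=
  poissonized_estimator_unbiased_general α k p q hp n hn
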